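/- arXiv:2506.22687 — 6 statements merged into one kernel-verified Lean document; each statement's English description precedes it below -/
import Mathlib

section
/- The interface of a sequential circuit preserves operand boundaries: if λ₁ ←α− λ₀ −β→ λ₂ is a sequentiable span with pushout cospan λ₁ −γ→ λ₃ ←θ− λ₂, then γ_V maps invars of λ₁ into invars of λ₃, and θ_V maps outvars of λ₂ into outvars of λ₃. -/
/-- A bare circuit: variables, units, input/output flows with their structure maps. -/
structure Circuit where
  V : Type
  U : Type
  I : Type
  O : Type
  s : I → V
  t : O → V
  tau : I → U
  sigma : O → U
  c : V → Bool   -- `true` = control (unit) type, `false` = Boolean type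

/-- Invars: variables not in the image of the output-flow target map. -/
def Circuit.invars (C : Circuit) : Set C.V := {v | v ∉ Set.range C.t}

/-- Outvars: variables not in the image of the input-flow source map. -/
def Circuit.outvars (C : Circuit) : Set C.V := {v | v ∉ Set.range C.s}

/-- The relation generating the pushout identifications on variables:
`f(a)` (in the left circuit) is glued to `g(a)` (in the right circuit). -/
def poRel {A X Y : Type} (f : A → X) (g : A → Y) : X ⊕ Y → X ⊕ Y → Prop :=
  fun p q => ∃ a, p = Sum.inl (f a) ∧ q = Sum.inr (g a)

/-- The pushout `C +_{λ₀} D` of a span with a trivial apex circuit (no units,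
no flows, variable type `A`), computed componentwise: variables are the quotient
of the disjoint union by the gluing relation; units and flows are disjoint
unions (the apex contributes none). -/
def po (C D : Circuit) {A : Type} (f : A → C.V) (g : A → D.V)
    (hc : ∀ a, C.c (f a) = D.c (g a)) : Circuit where
  V := Quot (poRel f g)
  U := C.U ⊕ D.U
  I := C.I ⊕ D.I
  O := C.O ⊕ D.O
  s := Sum.elim (fun i => Quot.mk (poRel f g) (Sum.inl (C.s i)))
                (fun i => Quot.mk (poRel f g) (Sum.inr (D.s i)))
  t := Sum.elim (fun o => Quot.mk (poRel f g) (Sum.inl (C.t o)))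
                (fun o => Quot.mk (poRel f g) (Sum.inr (D.t o)))
  tau := Sum.map C.tau D.tau
  sigma := Sum.map C.sigma D.sigma
  c := Quot.lift (Sum.elim C.c D.c) (by rintro p q ⟨a, rfl, rfl⟩; simpa using hc a)

/-- The canonical morphism (on variables) from the left circuit into the pushout. -/
def poInl (C D : Circuit) {A : Type} (f : A → C.V) (g : A → D.V)
    (hc : ∀ a, C.c (f a) = D.c (g a)) (v : C.V) : (po C D f g hc).V :=
  Quot.mk (poRel f g) (Sum.inl v)

/-- The canonical morphism (on variables) from the right circuit into the pushout. -/
def poInr (C D : Circuit) {A : Type} (f : A → C.V) (g : A → D.V)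
    (hc : ∀ a, C.c (f a) = D.c (g a)) (v : D.V) : (po C D f g hc).V :=
  Quot.mk (poRel f g) (Sum.inr v)

section poRel

variable {A X Y : Type} {f : A → X} {g : A → Y}

/- When `g` is injective, each `g a` is glued to `f a` only, so the class of `inl x` is `inl x`
together with the `inr (g a)` for `f a = x`; this description is invariant under `poRel`. -/
theorem poRel_class_inl (hg : Function.Injective g) {x : X} {p : X ⊕ Y}
    (h : Quot.mk (poRel f g) (.inl x) = Quot.mk (poRel f g) p) :
    p = .inl x ∨ ∃ a, f a = x ∧ p = .inr (g a) := by
  let inClass : X ⊕ Y → Prop := fun p => p = .inl x ∨ ∃ a, f a = x ∧ p = .inr (g a)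
  have respects : ∀ p q, poRel f g p q → inClass p = inClass q := by
    rintro _ _ ⟨a, rfl, rfl⟩
    simp [inClass, hg.eq_iff, eq_comm]
  simpa [inClass] using congrArg (Quot.lift inClass respects) h

theorem poRel_class_inr (hf : Function.Injective f) {y : Y} {p : X ⊕ Y}
    (h : Quot.mk (poRel f g) (.inr y) = Quot.mk (poRel f g) p) :
    p = .inr y ∨ ∃ a, g a = y ∧ p = .inl (f a) := by
  let inClass : X ⊕ Y → Prop := fun p => p = .inr y ∨ ∃ a, g a = y ∧ p = .inl (f a)
  have respects : ∀ p q, poRel f g p q → inClass p = inClass q := by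
    rintro _ _ ⟨a, rfl, rfl⟩
    simp [inClass, hf.eq_iff, eq_comm]
  simpa [inClass] using congrArg (Quot.lift inClass respects) h

end poRel

theorem poInl_mem_invars (C D : Circuit) {A : Type} (f : A → C.V) (g : A → D.V)
    (hc : ∀ a, C.c (f a) = D.c (g a)) (hg : Function.Injective g)
    (hgi : ∀ a, g a ∈ D.invars) {v : C.V} (hv : v ∈ C.invars) :
    poInl C D f g hc v ∈ (po C D f g hc).invars := by
  rintro ⟨o | o, ho⟩
  · rcases poRel_class_inl hg ho.symm with h | ⟨a, -, h⟩
    · exact hv ⟨o, Sum.inl.inj h⟩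
    · cases h
  · rcases poRel_class_inl hg ho.symm with h | ⟨a, -, h⟩
    · cases h
    · exact hgi a ⟨o, Sum.inr.inj h⟩

theorem poInr_mem_outvars (C D : Circuit) {A : Type} (f : A → C.V) (g : A → D.V)
    (hc : ∀ a, C.c (f a) = D.c (g a)) (hf : Function.Injective f)
    (hfo : ∀ a, f a ∈ C.outvars) {v : D.V} (hv : v ∈ D.outvars) :
    poInr C D f g hc v ∈ (po C D f g hc).outvars := by
  rintro ⟨i | i, hi⟩
  · rcases poRel_class_inr hf hi.symm with h | ⟨a, -, h⟩
    · cases h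
    · exact hfo a ⟨i, Sum.inl.inj h⟩
  · rcases poRel_class_inr hf hi.symm with h | ⟨a, -, h⟩
    · exact hv ⟨i, Sum.inr.inj h⟩
    · cases h

/-- Interface preservation for sequential circuits: for a sequentiable span
`λ₁ ←α− λ₀ −β→ λ₂` (trivial apex, monos, `α_V(V₀) ⊆ V₁⁻`, `β_V(V₀) ⊆ V₂⁺`)
with induced pushout cospan `(γ, θ)`, `γ_V` maps invars of `λ₁` into invars of
the pushout and `θ_V` maps outvars of `λ₂` into outvars of the pushout. -/
theorem sequential_interface (C D : Circuit) {A : Type}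
    (f : A → C.V) (g : A → D.V) (hc : ∀ a, C.c (f a) = D.c (g a))
    (hf : Function.Injective f) (hg : Function.Injective g)
    (hfo : ∀ a, f a ∈ C.outvars) (hgi : ∀ a, g a ∈ D.invars) :
    (poInl C D f g hc) '' C.invars ⊆ (po C D f g hc).invars ∧
    (poInr C D f g hc) '' D.outvars ⊆ (po C D f g hc).outvars :=
  ⟨Set.image_subset_iff.mpr fun _ hv => poInl_mem_invars C D f g hc hg hgi hv,
    Set.image_subset_iff.mpr fun _ hv => poInr_mem_outvars C D f g hc hf hfo hv⟩
end

section
/- For a totally sequentiable span λ₁ ←α− λ₀ −β→ λ₂ with pushout cospan λ₁ −γ→ λ₃ ←θ− λ₂, the invars of the pushout are exactly the image of the invars of λ₁ (γ_V(V₁⁺) = V₃⁺), and the outvars of the pushout are exactly the image of the outvars of λ₂ (θ_V(V₂⁻) = V₃⁻). -/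
/-!
Gluing along the injective maps `f = α_V` and `g = β_V` identifies each glued variable with exactly
one partner, so both legs of the pushout are injective on variables, and a variable of `λ₁` meets a
variable of `λ₂` only if both are glued. Every glued variable of `λ₂` is an invar, so it is not the
target of a flow, while every unglued variable of `λ₂` is such a target; hence the invars of `λ₃` are exactly
the images of the invars of `λ₁`. Dually, the outvars of `λ₃` are the images of those of `λ₂`.
-/

open Function Set

namespace poRel

variable {A X Y : Type} {f : A → X} {g : A → Y}

theorem quot_mk_inl_eq_inr (a : A) :
    Quot.mk (poRel f g) (.inl (f a)) = Quot.mk (poRel f g) (.inr (g a)) :=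
  Quot.sound ⟨a, rfl, rfl⟩

/- Collapsing every glued point to `none` respects the gluing, and it separates an unglued
point from everything else. -/
theorem mem_range_of_quot_mk_inl_eq_inr {v : X} {w : Y}
    (h : Quot.mk (poRel f g) (.inl v) = Quot.mk (poRel f g) (.inr w)) :
    v ∈ range f ∧ w ∈ range g := by
  classical
  let glued : X ⊕ Y → Prop := Sum.elim (· ∈ range f) (· ∈ range g)
  let collapse : X ⊕ Y → Option (X ⊕ Y) := fun p => if glued p then none else some p
  have hcollapse : ∀ p q, poRel f g p q → collapse p = collapse q := by
    rintro _ _ ⟨a, rfl, rfl⟩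
    simp [collapse, glued]
  have h' := congrArg (Quot.lift collapse hcollapse) h
  simp only [collapse, glued, Sum.elim_inl, Sum.elim_inr] at h'
  split_ifs at h' <;> simp_all

/- Sending `inr (g a)` to `inl (f a)` is well defined as `g` is injective, and it retracts the
quotient onto the left summand. -/
theorem quot_mk_inl_injective (hg : Injective g) :
    Injective (Quot.mk (poRel f g) ∘ Sum.inl) := by
  let retract : X ⊕ Y → X ⊕ Y := Sum.elim Sum.inl (extend g (Sum.inl ∘ f) Sum.inr)
  have hretract : ∀ p q, poRel f g p q → retract p = retract q := by
    rintro _ _ ⟨a, rfl, rfl⟩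
    simp [retract, hg.extend_apply]
  exact Injective.of_comp (f := Quot.lift retract hretract) Sum.inl_injective

theorem quot_mk_inr_injective (hf : Injective f) :
    Injective (Quot.mk (poRel f g) ∘ Sum.inr) := by
  let retract : X ⊕ Y → X ⊕ Y := Sum.elim (extend f (Sum.inr ∘ g) Sum.inl) Sum.inr
  have hretract : ∀ p q, poRel f g p q → retract p = retract q := by
    rintro _ _ ⟨a, rfl, rfl⟩
    simp [retract, hf.extend_apply]
  exact Injective.of_comp (f := Quot.lift retract hretract) Sum.inr_injective

end poRel

section Pushout

open poRel

variable {C D : Circuit} {A : Type} {f : A → C.V} {g : A → D.V} {hc : ∀ a, C.c (f a) = D.c (g a)}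

theorem poInl_injective (hg : Injective g) : Injective (poInl C D f g hc) :=
  quot_mk_inl_injective hg

theorem poInr_injective (hf : Injective f) : Injective (poInr C D f g hc) :=
  quot_mk_inr_injective hf

theorem range_po_t :
    range (po C D f g hc).t = range (poInl C D f g hc ∘ C.t) ∪ range (poInr C D f g hc ∘ D.t) :=
  Set.Sum.elim_range _ _

theorem range_po_s :
    range (po C D f g hc).s = range (poInl C D f g hc ∘ C.s) ∪ range (poInr C D f g hc ∘ D.s) :=
  Set.Sum.elim_range _ _

theorem preimage_poInl_invars (hg : Injective g) (hgi : range g ⊆ D.invars) :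
    poInl C D f g hc ⁻¹' (po C D f g hc).invars = C.invars := by
  ext v
  have hinr : poInl C D f g hc v ∉ range (poInr C D f g hc ∘ D.t) := by
    rintro ⟨o, ho⟩
    exact hgi (mem_range_of_quot_mk_inl_eq_inr ho.symm).2 ⟨o, rfl⟩
  rw [mem_preimage, Circuit.invars, Circuit.invars, mem_ofPred_eq, mem_ofPred_eq, range_po_t,
    mem_union, or_iff_left hinr, range_comp, (poInl_injective hg).mem_set_image]

theorem preimage_poInr_outvars (hf : Injective f) (hfo : range f ⊆ C.outvars) :
    poInr C D f g hc ⁻¹' (po C D f g hc).outvars = D.outvars := by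
  ext w
  have hinl : poInr C D f g hc w ∉ range (poInl C D f g hc ∘ C.s) := by
    rintro ⟨i, hi⟩
    exact hfo (mem_range_of_quot_mk_inl_eq_inr hi).1 ⟨i, rfl⟩
  rw [mem_preimage, Circuit.outvars, Circuit.outvars, mem_ofPred_eq, mem_ofPred_eq, range_po_s,
    mem_union, or_iff_right hinl, range_comp, (poInr_injective hf).mem_set_image]

theorem po_invars_subset_range_poInl (hgi : D.invars ⊆ range g) :
    (po C D f g hc).invars ⊆ range (poInl C D f g hc) := by
  rintro ⟨v | w⟩ hx
  · exact ⟨v, rfl⟩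
  · by_cases hw : w ∈ range D.t
    · obtain ⟨o, rfl⟩ := hw
      exact absurd ⟨.inr o, rfl⟩ hx
    · obtain ⟨a, rfl⟩ := hgi hw
      exact ⟨f a, quot_mk_inl_eq_inr a⟩

theorem po_outvars_subset_range_poInr (hfo : C.outvars ⊆ range f) :
    (po C D f g hc).outvars ⊆ range (poInr C D f g hc) := by
  rintro ⟨v | w⟩ hx
  · by_cases hv : v ∈ range C.s
    · obtain ⟨i, rfl⟩ := hv
      exact absurd ⟨.inl i, rfl⟩ hx
    · obtain ⟨a, rfl⟩ := hfo hv
      exact ⟨g a, (quot_mk_inl_eq_inr a).symm⟩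
  · exact ⟨w, rfl⟩

theorem image_poInl_invars (hg : Injective g) (hgi : range g = D.invars) :
    poInl C D f g hc '' C.invars = (po C D f g hc).invars := by
  rw [← preimage_poInl_invars (hc := hc) hg hgi.subset,
    image_preimage_eq_of_subset (po_invars_subset_range_poInl hgi.superset)]

theorem image_poInr_outvars (hf : Injective f) (hfo : range f = C.outvars) :
    poInr C D f g hc '' D.outvars = (po C D f g hc).outvars := by
  rw [← preimage_poInr_outvars (hc := hc) hf hfo.subset,
    image_preimage_eq_of_subset (po_outvars_subset_range_poInr hfo.superset)]

end Pushout

/-- For a totally sequentiable span `λ₁ ←α− λ₀ −β→ λ₂` (trivial apex, monos,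
`α_V(V₀) = V₁⁻`, `β_V(V₀) = V₂⁺`) with induced pushout cospan `(γ, θ)`, the
invars of the pushout are exactly `γ_V(V₁⁺)` and its outvars are exactly
`θ_V(V₂⁻)`. -/
theorem total_sequential_interface (C D : Circuit) {A : Type}
    (f : A → C.V) (g : A → D.V) (hc : ∀ a, C.c (f a) = D.c (g a))
    (hf : Function.Injective f) (hg : Function.Injective g)
    (hfo : Set.range f = C.outvars) (hgi : Set.range g = D.invars) :
    (poInl C D f g hc) '' C.invars = (po C D f g hc).invars ∧
    (poInr C D f g hc) '' D.outvars = (po C D f g hc).outvars :=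
  ⟨image_poInl_invars hg hgi, image_poInr_outvars hf hfo⟩
end

section
/- The unit circuit Λ (the trivial circuit with exactly one control variable, no units, no flows) is a left and right identity for sequencing up to isomorphism: for any circuit λ and any sequentiable span ρ with Λ as one operand, Λ ▷_ρ λ ≅ λ and λ ▷_ρ Λ ≅ λ. -/
/-- Isomorphism of circuits: componentwise bijections commuting with all
structure maps and the typing. -/
structure CircIso (C D : Circuit) where
  eV : C.V ≃ D.V
  eU : C.U ≃ D.U
  eI : C.I ≃ D.I
  eO : C.O ≃ D.O
  hs : ∀ i, D.s (eI i) = eV (C.s i)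
  ht : ∀ o, D.t (eO o) = eV (C.t o)
  htau : ∀ i, D.tau (eI i) = eU (C.tau i)
  hsigma : ∀ o, D.sigma (eO o) = eU (C.sigma o)
  hc : ∀ v, D.c (eV v) = C.c v

/-- The unit circuit `Λ`: exactly one control variable, no units, no flows. -/
def unitCircuit : Circuit where
  V := PUnit
  U := Empty
  I := Empty
  O := Empty
  s := Empty.elim
  t := Empty.elim
  tau := Empty.elim
  sigma := Empty.elim
  c := fun _ => true

/-!
Sequencing with `Λ` is a pushout whose apex maps bijectively onto `Λ`: the apex has nonempty
variable set injecting into the one-point set of `Λ`. Pushing out along a bijection of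
variables merely renames the glued variables, and a trivial circuit (no units, no flows)
contributes nothing else, so the pushout is isomorphic to the other operand.
-/

section PushoutAlongBijection

variable {A X Y : Type} (f : A → X) (g : A → Y)

noncomputable def poRelQuotEquivOfBijectiveLeft (hf : Function.Bijective f) :
    Quot (poRel f g) ≃ Y where
  toFun := Quot.lift (Sum.elim (g ∘ (Equiv.ofBijective f hf).symm) id) <| by
    rintro _ _ ⟨a, rfl, rfl⟩
    simp
  invFun y := Quot.mk _ (Sum.inr y)
  left_inv := by
    rintro ⟨x | y⟩
    · refine (Quot.sound ⟨(Equiv.ofBijective f hf).symm x, ?_, rfl⟩).symm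
      exact congrArg Sum.inl (Equiv.ofBijective_apply_symm_apply f hf x).symm
    · rfl
  right_inv _ := rfl

noncomputable def poRelQuotEquivOfBijectiveRight (hg : Function.Bijective g) :
    Quot (poRel f g) ≃ X where
  toFun := Quot.lift (Sum.elim id (f ∘ (Equiv.ofBijective g hg).symm)) <| by
    rintro _ _ ⟨a, rfl, rfl⟩
    simp
  invFun x := Quot.mk _ (Sum.inl x)
  left_inv := by
    rintro ⟨x | y⟩
    · rfl
    · refine Quot.sound ⟨(Equiv.ofBijective g hg).symm y, rfl, ?_⟩
      exact congrArg Sum.inr (Equiv.ofBijective_apply_symm_apply g hg y).symm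
  right_inv _ := rfl

end PushoutAlongBijection

section PushoutWithTrivialCircuit

variable {A : Type}

noncomputable def poIsoRightOfBijectiveLeft (C D : Circuit) [IsEmpty C.U] [IsEmpty C.I]
    [IsEmpty C.O] (f : A → C.V) (g : A → D.V) (hc : ∀ a, C.c (f a) = D.c (g a))
    (hf : Function.Bijective f) : CircIso (po C D f g hc) D where
  eV := poRelQuotEquivOfBijectiveLeft f g hf
  eU := Equiv.emptySum C.U D.U
  eI := Equiv.emptySum C.I D.I
  eO := Equiv.emptySum C.O D.O
  hs := by rintro (i | i); exact isEmptyElim i; rfl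
  ht := by rintro (o | o); exact isEmptyElim o; rfl
  htau := by rintro (i | i); exact isEmptyElim i; rfl
  hsigma := by rintro (o | o); exact isEmptyElim o; rfl
  hc := by
    rintro ⟨x | y⟩
    · calc D.c (g ((Equiv.ofBijective f hf).symm x))
          = C.c (f ((Equiv.ofBijective f hf).symm x)) := (hc _).symm
        _ = C.c x := congrArg C.c (Equiv.ofBijective_apply_symm_apply f hf x)
    · rfl

noncomputable def poIsoLeftOfBijectiveRight (C D : Circuit) [IsEmpty D.U] [IsEmpty D.I]
    [IsEmpty D.O] (f : A → C.V) (g : A → D.V) (hc : ∀ a, C.c (f a) = D.c (g a))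
    (hg : Function.Bijective g) : CircIso (po C D f g hc) C where
  eV := poRelQuotEquivOfBijectiveRight f g hg
  eU := Equiv.sumEmpty C.U D.U
  eI := Equiv.sumEmpty C.I D.I
  eO := Equiv.sumEmpty C.O D.O
  hs := by rintro (i | i); rfl; exact isEmptyElim i
  ht := by rintro (o | o); rfl; exact isEmptyElim o
  htau := by rintro (i | i); rfl; exact isEmptyElim i
  hsigma := by rintro (o | o); rfl; exact isEmptyElim o
  hc := by
    rintro ⟨x | y⟩
    · rfl
    · calc C.c (f ((Equiv.ofBijective g hg).symm y))
          = D.c (g ((Equiv.ofBijective g hg).symm y)) := hc _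
        _ = D.c y := congrArg D.c (Equiv.ofBijective_apply_symm_apply g hg y)

end PushoutWithTrivialCircuit

instance : IsEmpty unitCircuit.U := inferInstanceAs (IsEmpty Empty)
instance : IsEmpty unitCircuit.I := inferInstanceAs (IsEmpty Empty)
instance : IsEmpty unitCircuit.O := inferInstanceAs (IsEmpty Empty)

theorem unitCircuit_bijective_of_injective {A : Type} [Nonempty A] {f : A → unitCircuit.V}
    (hf : Function.Injective f) : Function.Bijective f :=
  ⟨hf, fun _ => ⟨Classical.arbitrary A, Subsingleton.elim (α := PUnit) _ _⟩⟩

theorem unit_circuit_sequencing_identity_general (C : Circuit)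
    {A : Type} [Nonempty A] (fL : A → unitCircuit.V) (gL : A → C.V)
    (hfL : Function.Injective fL)
    (htypL : ∀ a, C.c (gL a) = true)
    {A' : Type} [Nonempty A'] (fR : A' → C.V) (gR : A' → unitCircuit.V)
    (hgR : Function.Injective gR)
    (htypR : ∀ a, C.c (fR a) = true) :
    Nonempty (CircIso (po unitCircuit C fL gL (fun a => (htypL a).symm)) C) ∧
    Nonempty (CircIso (po C unitCircuit fR gR (fun a => htypR a)) C) :=
  ⟨⟨poIsoRightOfBijectiveLeft _ _ _ _ _ (unitCircuit_bijective_of_injective hfL)⟩,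
    ⟨poIsoLeftOfBijectiveRight _ _ _ _ _ (unitCircuit_bijective_of_injective hgR)⟩⟩

/-- The unit circuit `Λ` is a left and right identity for (partial or total)
sequencing up to isomorphism: for any sequentiable span with `Λ` as one
operand, `Λ ▷ρ λ ≅ λ` and `λ ▷ρ Λ ≅ λ`.  (The apex of such a span is a trivial
circuit, hence has a nonempty variable set injecting into `Λ`'s.) -/
theorem unit_circuit_sequencing_identity (C : Circuit)
    {A : Type} [Nonempty A] (fL : A → unitCircuit.V) (gL : A → C.V)
    (hfL : Function.Injective fL) (hgL : Function.Injective gL)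
    (hgLi : ∀ a, gL a ∈ C.invars) (htypL : ∀ a, C.c (gL a) = true)
    {A' : Type} [Nonempty A'] (fR : A' → C.V) (gR : A' → unitCircuit.V)
    (hfR : Function.Injective fR) (hgR : Function.Injective gR)
    (hfRo : ∀ a, fR a ∈ C.outvars) (htypR : ∀ a, C.c (fR a) = true) :
    Nonempty (CircIso (po unitCircuit C fL gL (fun a => (htypL a).symm)) C) ∧
    Nonempty (CircIso (po C unitCircuit fR gR (fun a => htypR a)) C) :=
  unit_circuit_sequencing_identity_general C fL gL hfL htypL fR gR hgR htypR
end

section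
/- Total sequencing of circuits is associative up to isomorphism: (λ₁ ⊵_{ρ₁} λ₂) ⊵_{ρ₄} λ₃ ≅ λ₁ ⊵_{ρ₃} (λ₂ ⊵_{ρ₂} λ₃) where the spans ρ₃ and ρ₄ are derived from ρ₁ and ρ₂ by composing with the pushout injections. -/
section PoAssoc

variable {A B : Type} (C₁ C₂ C₃ : Circuit)
  (α : A → C₁.V) (β : A → C₂.V) (φ : B → C₂.V) (ψ : B → C₃.V)
  (hαβ : ∀ a, C₁.c (α a) = C₂.c (β a)) (hφψ : ∀ b, C₂.c (φ b) = C₃.c (ψ b))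

abbrev poNestLeft : Circuit :=
  po (po C₁ C₂ α β hαβ) C₃ (fun b => poInr C₁ C₂ α β hαβ (φ b)) ψ (fun b => hφψ b)

abbrev poNestRight : Circuit :=
  po C₁ (po C₂ C₃ φ ψ hφψ) α (fun a => poInl C₂ C₃ φ ψ hφψ (β a)) (fun a => hαβ a)

def poAssocEquivV :
    (poNestLeft C₁ C₂ C₃ α β φ ψ hαβ hφψ).V ≃ (poNestRight C₁ C₂ C₃ α β φ ψ hαβ hφψ).V where
  toFun := Quot.lift
    (Sum.elim
      (Quot.lift
        (Sum.elim (fun v₁ => Quot.mk _ (.inl v₁))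
          (fun v₂ => Quot.mk _ (.inr (Quot.mk _ (.inl v₂)))))
        (by rintro _ _ ⟨a, rfl, rfl⟩; exact Quot.sound ⟨a, rfl, rfl⟩))
      (fun v₃ => Quot.mk _ (.inr (Quot.mk _ (.inr v₃)))))
    (by
      rintro _ _ ⟨b, rfl, rfl⟩
      exact congrArg (fun x => Quot.mk _ (Sum.inr x)) (Quot.sound ⟨b, rfl, rfl⟩))
  invFun := Quot.lift
    (Sum.elim
      (fun v₁ => Quot.mk _ (.inl (Quot.mk _ (.inl v₁))))
      (Quot.lift
        (Sum.elim (fun v₂ => Quot.mk _ (.inl (Quot.mk _ (.inr v₂))))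
          (fun v₃ => Quot.mk _ (.inr v₃)))
        (by rintro _ _ ⟨b, rfl, rfl⟩; exact Quot.sound ⟨b, rfl, rfl⟩)))
    (by
      rintro _ _ ⟨a, rfl, rfl⟩
      exact congrArg (fun x => Quot.mk _ (Sum.inl x)) (Quot.sound ⟨a, rfl, rfl⟩))
  left_inv := by rintro ⟨⟨⟨v₁ | v₂⟩⟩ | v₃⟩ <;> rfl
  right_inv := by rintro ⟨v₁ | ⟨⟨v₂ | v₃⟩⟩⟩ <;> rfl

def poAssocIso :
    CircIso (poNestLeft C₁ C₂ C₃ α β φ ψ hαβ hφψ) (poNestRight C₁ C₂ C₃ α β φ ψ hαβ hφψ) where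
  eV := poAssocEquivV C₁ C₂ C₃ α β φ ψ hαβ hφψ
  eU := Equiv.sumAssoc C₁.U C₂.U C₃.U
  eI := Equiv.sumAssoc C₁.I C₂.I C₃.I
  eO := Equiv.sumAssoc C₁.O C₂.O C₃.O
  hs := by rintro ((i | i) | i) <;> rfl
  ht := by rintro ((o | o) | o) <;> rfl
  htau := by rintro ((i | i) | i) <;> rfl
  hsigma := by rintro ((o | o) | o) <;> rfl
  hc := by rintro ⟨⟨⟨v₁ | v₂⟩⟩ | v₃⟩ <;> rfl

end PoAssoc

theorem total_sequencing_assoc_general (C₁ C₂ C₃ : Circuit)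
    {A B : Type}
    (α : A → C₁.V) (β : A → C₂.V) (φ : B → C₂.V) (ψ : B → C₃.V)
    (hαβ : ∀ a, C₁.c (α a) = C₂.c (β a)) (hφψ : ∀ b, C₂.c (φ b) = C₃.c (ψ b)) :
    Nonempty (CircIso
      (po (po C₁ C₂ α β hαβ) C₃
        (fun b => poInr C₁ C₂ α β hαβ (φ b)) ψ (fun b => hφψ b))
      (po C₁ (po C₂ C₃ φ ψ hφψ) α
        (fun a => poInl C₂ C₃ φ ψ hφψ (β a)) (fun a => hαβ a))) :=
  ⟨poAssocIso C₁ C₂ C₃ α β φ ψ hαβ hφψ⟩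

/-- Total sequencing is associative up to isomorphism:
`(λ₁ ⊵ρ₁ λ₂) ⊵ρ₄ λ₃ ≅ λ₁ ⊵ρ₃ (λ₂ ⊵ρ₂ λ₃)`, where `ρ₁ : λ₁ ←α− λ₀ −β→ λ₂` and
`ρ₂ : λ₂ ←φ− λ₄ −ψ→ λ₃` are totally sequentiable spans (trivial apexes, monos,
`α(V₀) = V₁⁻`, `β(V₀) = V₂⁺`, `φ(V₄) = V₂⁻`, `ψ(V₄) = V₃⁺`), and the derived
spans `ρ₃`, `ρ₄` are obtained by composing with the pushout injections. -/
theorem total_sequencing_assoc (C₁ C₂ C₃ : Circuit)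
    {A B : Type} [Nonempty A] [Nonempty B]
    (α : A → C₁.V) (β : A → C₂.V) (φ : B → C₂.V) (ψ : B → C₃.V)
    (hα : Function.Injective α) (hβ : Function.Injective β)
    (hφ : Function.Injective φ) (hψ : Function.Injective ψ)
    (hαo : Set.range α = C₁.outvars) (hβi : Set.range β = C₂.invars)
    (hφo : Set.range φ = C₂.outvars) (hψi : Set.range ψ = C₃.invars)
    (hαβ : ∀ a, C₁.c (α a) = C₂.c (β a)) (hφψ : ∀ b, C₂.c (φ b) = C₃.c (ψ b)) :
    Nonempty (CircIso
      (po (po C₁ C₂ α β hαβ) C₃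
        (fun b => poInr C₁ C₂ α β hαβ (φ b)) ψ (fun b => hφψ b))
      (po C₁ (po C₂ C₃ φ ψ hφψ) α
        (fun a => poInl C₂ C₃ φ ψ hφψ (β a)) (fun a => hαβ a))) :=
  total_sequencing_assoc_general C₁ C₂ C₃ α β φ ψ hαβ hφψ
end

section
/- Every NAND circuit (directed acyclic graph with input variables, output variables, and fan-in-2 fan-out-1 NAND gates) can be transformed into a control-driven Boolean circuit: the construction with V ≅ E ⊔ E, U ≅ G (gates), O ≅ E₁ ⊔ E₁, I ≅ E₂ ⊔ E₂ and the induced structure maps satisfies all the axioms of a control-driven Boolean circuit, including surjectivity of c, σ, τ and their restrictions to control-typed flows, and existence of a control invar and a control outvar. -/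
variable {N : Type} [Fintype N] [DecidableEq N]

/-- Out-degree of a node in an edge set. -/
def outdeg (E : Finset (N × N)) (n : N) : ℕ := (E.filter (fun e => e.1 = n)).card

/-- In-degree of a node in an edge set. -/
def indeg (E : Finset (N × N)) (n : N) : ℕ := (E.filter (fun e => e.2 = n)).card

/-- A node is a NAND gate iff it has fan-in 2 and fan-out 1. -/
def isGate (E : Finset (N × N)) (n : N) : Prop := indeg E n = 2 ∧ outdeg E n = 1

/-- A NAND circuit: a finite DAG whose nodes are input variables (in-degree 0),
output variables (out-degree 0) or fan-in-2 fan-out-1 NAND gates, with no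
isolated nodes, a nonempty edge set, and no edges from inputs to outputs
(edges run input→gate, gate→gate, or gate→output). -/
structure IsNandCircuit (E : Finset (N × N)) : Prop where
  edges_nonempty : E.Nonempty
  no_isolated : ∀ n : N, indeg E n ≠ 0 ∨ outdeg E n ≠ 0
  classify : ∀ n : N, indeg E n = 0 ∨ outdeg E n = 0 ∨ isGate E n
  no_input_to_output : ∀ e ∈ E, ¬ (indeg E e.1 = 0 ∧ outdeg E e.2 = 0)
  acyclic : WellFounded (fun a b : N => (b, a) ∈ E)

/-- Variables of the translated circuit: two copies of each edge
(`inl` = control copy, `inr` = Boolean copy). -/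
def Vc (E : Finset (N × N)) : Type := {e : N × N // e ∈ E} ⊕ {e : N × N // e ∈ E}

/-- Units of the translated circuit: the gates. -/
def Uc (E : Finset (N × N)) : Type := {n : N // isGate E n}

/-- `E₁`: edges whose source is a gate (i.e. all edges except input→gate ones). -/
def E1 (E : Finset (N × N)) : Type := {e : N × N // e ∈ E ∧ isGate E e.1}

/-- `E₂`: edges whose target is a gate (i.e. all edges except gate→output ones). -/
def E2 (E : Finset (N × N)) : Type := {e : N × N // e ∈ E ∧ isGate E e.2}

/-- Input flows: two copies of `E₂`. -/
def Ic (E : Finset (N × N)) : Type := E2 E ⊕ E2 E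

/-- Output flows: two copies of `E₁`. -/
def Oc (E : Finset (N × N)) : Type := E1 E ⊕ E1 E

/-- Source map `s : I → V`: copy `j` of edge `(m,n)` ↦ variable copy `j` of `(m,n)`. -/
def smap (E : Finset (N × N)) : Ic E → Vc E :=
  Sum.elim (fun e => Sum.inl ⟨e.1, e.2.1⟩) (fun e => Sum.inr ⟨e.1, e.2.1⟩)

/-- Target-unit map `τ : I → U`: copy `j` of edge `(m,n)` ↦ gate `n`. -/
def taumap (E : Finset (N × N)) : Ic E → Uc E :=
  Sum.elim (fun e => ⟨e.1.2, e.2.2⟩) (fun e => ⟨e.1.2, e.2.2⟩)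

/-- Target map `t : O → V`: copy `j` of edge `(m,n)` ↦ variable copy `j` of `(m,n)`. -/
def tmap (E : Finset (N × N)) : Oc E → Vc E :=
  Sum.elim (fun e => Sum.inl ⟨e.1, e.2.1⟩) (fun e => Sum.inr ⟨e.1, e.2.1⟩)

/-- Source-unit map `σ : O → U`: copy `j` of edge `(m,n)` ↦ gate `m`. -/
def sigmamap (E : Finset (N × N)) : Oc E → Uc E :=
  Sum.elim (fun e => ⟨e.1.1, e.2.2⟩) (fun e => ⟨e.1.1, e.2.2⟩)

/-- Typing: copy 1 (`inl`) is a control variable, copy 2 (`inr`) is Boolean. -/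
def cmap (E : Finset (N × N)) : Vc E → Bool :=
  Sum.elim (fun _ => true) (fun _ => false)

/-!
Each gate has an in-edge and an out-edge, so the control copies of those edges already make
`σ` and `τ` (even restricted to control flows) surjective. An input→gate edge exists by double
counting: if every edge left a gate, each node would satisfy `2 * outdeg ≤ indeg`, and summing
gives `2 * #E ≤ #E`. A gate→output edge exists by acyclicity: the target of an edge that is
minimal for the successor relation has no out-edge, so it is not a gate.
-/

section Digraph

variable {V : Type} [DecidableEq V] {E : Finset (V × V)} {n : V}

theorem outdeg_ne_zero_iff : outdeg E n ≠ 0 ↔ ∃ e ∈ E, e.1 = n := by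
  rw [outdeg, Finset.card_ne_zero, Finset.filter_nonempty_iff]

theorem indeg_ne_zero_iff : indeg E n ≠ 0 ↔ ∃ e ∈ E, e.2 = n := by
  rw [indeg, Finset.card_ne_zero, Finset.filter_nonempty_iff]

theorem isGate.exists_mem_fst_eq (h : isGate E n) : ∃ e ∈ E, e.1 = n :=
  outdeg_ne_zero_iff.1 (by rw [h.2]; exact one_ne_zero)

theorem isGate.exists_mem_snd_eq (h : isGate E n) : ∃ e ∈ E, e.2 = n :=
  indeg_ne_zero_iff.1 (by rw [h.1]; exact two_ne_zero)

theorem card_eq_sum_outdeg [Fintype V] (E : Finset (V × V)) : E.card = ∑ n, outdeg E n :=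
  Finset.card_eq_sum_card_fiberwise fun e _ => Finset.mem_univ e.1

theorem card_eq_sum_indeg [Fintype V] (E : Finset (V × V)) : E.card = ∑ n, indeg E n :=
  Finset.card_eq_sum_card_fiberwise fun e _ => Finset.mem_univ e.2

theorem exists_mem_not_isGate_fst [Fintype V] (hE : E.Nonempty) : ∃ e ∈ E, ¬ isGate E e.1 := by
  by_contra! hgate
  have hdeg : ∀ n, 2 * outdeg E n ≤ indeg E n := by
    intro n
    by_cases h : outdeg E n = 0
    · simp [h]
    · obtain ⟨e, he, rfl⟩ := outdeg_ne_zero_iff.1 h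
      rw [(hgate e he).1, (hgate e he).2]
  have hcard : 2 * E.card ≤ E.card :=
    calc 2 * E.card = ∑ n, 2 * outdeg E n := by rw [card_eq_sum_outdeg, Finset.mul_sum]
      _ ≤ ∑ n, indeg E n := Finset.sum_le_sum fun n _ => hdeg n
      _ = E.card := (card_eq_sum_indeg E).symm
  exact hE.card_pos.ne' (by omega)

theorem exists_mem_not_isGate_snd (hwf : WellFounded fun a b : V => (b, a) ∈ E)
    (hE : E.Nonempty) : ∃ e ∈ E, ¬ isGate E e.2 := by
  obtain ⟨e₀, he₀⟩ := hE
  obtain ⟨_, ⟨e, he, rfl⟩, hmin⟩ :=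
    hwf.has_min {n | ∃ e ∈ E, e.2 = n} ⟨e₀.2, e₀, he₀, rfl⟩
  refine ⟨e, he, fun hgate => ?_⟩
  obtain ⟨f, hf, hfe⟩ := hgate.exists_mem_fst_eq
  exact hmin f.2 ⟨f, hf, rfl⟩ (hfe ▸ hf)

end Digraph

section Translation

variable {V : Type} {E : Finset (V × V)}

theorem cmap_surjective (hE : E.Nonempty) : Function.Surjective (cmap E) := by
  obtain ⟨e, he⟩ := hE
  rintro (_ | _)
  exacts [⟨Sum.inr ⟨e, he⟩, rfl⟩, ⟨Sum.inl ⟨e, he⟩, rfl⟩]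

variable [DecidableEq V]

theorem sigmamap_control_surjective :
    Function.Surjective
      (fun o : {o : Oc E // cmap E (tmap E o) = true} => sigmamap E o.1) := by
  rintro ⟨n, hn⟩
  obtain ⟨e, he, rfl⟩ := hn.exists_mem_fst_eq
  exact ⟨⟨Sum.inl ⟨e, he, hn⟩, rfl⟩, rfl⟩

theorem taumap_control_surjective :
    Function.Surjective
      (fun i : {i : Ic E // cmap E (smap E i) = true} => taumap E i.1) := by
  rintro ⟨n, hn⟩
  obtain ⟨e, he, rfl⟩ := hn.exists_mem_snd_eq
  exact ⟨⟨Sum.inl ⟨e, he, hn⟩, rfl⟩, rfl⟩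

theorem inl_notMem_range_tmap {e : V × V} (he : e ∈ E) (h : ¬ isGate E e.1) :
    (Sum.inl ⟨e, he⟩ : Vc E) ∉ Set.range (tmap E) := by
  rintro ⟨o | o, ho⟩
  · obtain rfl : o.1 = e := congrArg Subtype.val (Sum.inl_injective ho)
    exact h o.2.2
  · exact Sum.inr_ne_inl ho

theorem inl_notMem_range_smap {e : V × V} (he : e ∈ E) (h : ¬ isGate E e.2) :
    (Sum.inl ⟨e, he⟩ : Vc E) ∉ Set.range (smap E) := by
  rintro ⟨i | i, hi⟩
  · obtain rfl : i.1 = e := congrArg Subtype.val (Sum.inl_injective hi)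
    exact h i.2.2
  · exact Sum.inr_ne_inl hi

end Translation

/-- Every NAND circuit is a control-driven Boolean circuit: the edge-doubling
construction satisfies all the axioms of a control-driven Boolean circuit —
surjectivity of `c`, `σ`, `τ`, surjectivity of the restrictions of `σ` and `τ`
to flows attached to control variables, and existence of a control invar and a
control outvar. -/
theorem nand_circuit_is_control_driven (E : Finset (N × N))
    (hN : IsNandCircuit E) :
    Function.Surjective (cmap E) ∧
    Function.Surjective (taumap E) ∧
    Function.Surjective (sigmamap E) ∧
    Function.Surjective
      (fun o : {o : Oc E // cmap E (tmap E o) = true} => sigmamap E o.1) ∧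
    Function.Surjective
      (fun i : {i : Ic E // cmap E (smap E i) = true} => taumap E i.1) ∧
    (∃ v : Vc E, cmap E v = true ∧ v ∉ Set.range (tmap E)) ∧
    (∃ w : Vc E, cmap E w = true ∧ w ∉ Set.range (smap E)) := by
  have hσ := sigmamap_control_surjective (E := E)
  have hτ := taumap_control_surjective (E := E)
  obtain ⟨e, he, hsrc⟩ := exists_mem_not_isGate_fst hN.edges_nonempty
  obtain ⟨f, hf, htgt⟩ := exists_mem_not_isGate_snd hN.acyclic hN.edges_nonempty
  exact ⟨cmap_surjective hN.edges_nonempty, hτ.of_comp, hσ.of_comp, hσ, hτ,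
    ⟨_, rfl, inl_notMem_range_tmap he hsrc⟩, ⟨_, rfl, inl_notMem_range_smap hf htgt⟩⟩
end

section
/- The control-driven circuit obtained from a NAND circuit by the edge-doubling construction is sound: every variable that is an invar or the source of an input flow has a path through units to an outvar. -/
/-! A variable that is the source of an input flow is a copy of an edge `(m, n)` into a gate `n`.
The unique edge `(n, p)` leaving `n` gives a step to the control copy of `(n, p)`; following
such steps along the acyclic circuit must end at an edge into a non-gate, whose copies are
outvars. An invar is a copy of an edge leaving a non-gate, and in a NAND circuit such an edge
enters a gate, so its copies are sources of input flows. -/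

variable {N : Type} [Fintype N] [DecidableEq N]

/-- One step of a chain `v → u → w` in the translated circuit: an input flow
from `v` into a unit and an output flow from the same unit to `w`. -/
def stepc (E : Finset (N × N)) (v w : Vc E) : Prop :=
  ∃ (i : Ic E) (o : Oc E),
    smap E i = v ∧ taumap E i = sigmamap E o ∧ tmap E o = w


section

variable {V : Type} {E : Finset (V × V)}

def Vc.edge : Vc E → V × V := Sum.elim Subtype.val Subtype.val

lemma Vc.edge_mem : ∀ v : Vc E, v.edge ∈ E
  | .inl e => e.2
  | .inr e => e.2

variable [DecidableEq V]

lemma outdeg_ne_zero_of_mem {m n : V} (h : (m, n) ∈ E) : outdeg E m ≠ 0 :=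
  Finset.card_ne_zero_of_mem (Finset.mem_filter.2 ⟨h, rfl⟩)

lemma indeg_ne_zero_of_mem {m n : V} (h : (m, n) ∈ E) : indeg E n ≠ 0 :=
  Finset.card_ne_zero_of_mem (Finset.mem_filter.2 ⟨h, rfl⟩)

lemma isGate.exists_mem {n : V} (hn : isGate E n) : ∃ p, (n, p) ∈ E := by
  have : 0 < outdeg E n := hn.2 ▸ Nat.one_pos
  obtain ⟨⟨m, p⟩, he⟩ := Finset.card_pos.1 this
  obtain ⟨hmp, rfl⟩ := Finset.mem_filter.1 he
  exact ⟨p, hmp⟩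

lemma IsNandCircuit.isGate_snd_of_not_isGate_fst (hE : IsNandCircuit E) {m n : V}
    (h : (m, n) ∈ E) (hm : ¬ isGate E m) : isGate E n := by
  rcases hE.classify n with hn | hn | hn
  · exact absurd hn (indeg_ne_zero_of_mem h)
  · rcases hE.classify m with hm' | hm' | hm'
    · exact absurd ⟨hm', hn⟩ (hE.no_input_to_output _ h)
    · exact absurd hm' (outdeg_ne_zero_of_mem h)
    · exact absurd hm' hm
  · exact hn

lemma mem_range_smap_iff {v : Vc E} : v ∈ Set.range (smap E) ↔ isGate E v.edge.2 := by
  constructor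
  · rintro ⟨i | i, rfl⟩ <;> exact i.2.2
  · rcases v with e | e <;> intro h
    exacts [⟨.inl ⟨e.1, e.2, h⟩, rfl⟩, ⟨.inr ⟨e.1, e.2, h⟩, rfl⟩]

lemma mem_range_tmap_iff {v : Vc E} : v ∈ Set.range (tmap E) ↔ isGate E v.edge.1 := by
  constructor
  · rintro ⟨o | o, rfl⟩ <;> exact o.2.2
  · rcases v with e | e <;> intro h
    exacts [⟨.inl ⟨e.1, e.2, h⟩, rfl⟩, ⟨.inr ⟨e.1, e.2, h⟩, rfl⟩]

lemma stepc_inl_of_isGate {v : Vc E} (hv : isGate E v.edge.2) {p : V}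
    (hp : (v.edge.2, p) ∈ E) : stepc E v (.inl ⟨(v.edge.2, p), hp⟩) := by
  rcases v with e | e
  exacts [⟨.inl ⟨e.1, e.2, hv⟩, .inl ⟨_, hp, hv⟩, rfl, rfl, rfl⟩,
    ⟨.inr ⟨e.1, e.2, hv⟩, .inl ⟨_, hp, hv⟩, rfl, rfl, rfl⟩]

theorem IsNandCircuit.exists_chain_to_outvar (hE : IsNandCircuit E) {v : Vc E}
    (hv : v ∈ Set.range (smap E)) :
    ∃ w ∉ Set.range (smap E), Relation.TransGen (stepc E) v w := by
  suffices ∀ n, ∀ v : Vc E, v.edge.2 = n → isGate E n →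
      ∃ w ∉ Set.range (smap E), Relation.TransGen (stepc E) v w from
    this _ v rfl (mem_range_smap_iff.1 hv)
  intro n
  induction n using hE.acyclic.induction with
  | _ n ih =>
    rintro v rfl hn
    obtain ⟨p, hp⟩ := hn.exists_mem
    let w : Vc E := .inl ⟨(v.edge.2, p), hp⟩
    have hstep : stepc E v w := stepc_inl_of_isGate hn hp
    by_cases hpg : isGate E p
    · obtain ⟨u, hu, hchain⟩ := ih p hp w rfl hpg
      exact ⟨u, hu, .head hstep hchain⟩
    · exact ⟨w, mem_range_smap_iff.not.2 hpg, .single hstep⟩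

end

/-- The control-driven circuit obtained from a NAND circuit by the
edge-doubling construction is sound: every variable that is an invar or the
source of an input flow has a path through units to an outvar. -/
theorem nand_translation_sound (E : Finset (N × N)) (hN : IsNandCircuit E) :
    ∀ v : Vc E, (v ∈ Set.range (smap E) ∨ v ∉ Set.range (tmap E)) →
      ∃ w : Vc E, w ∉ Set.range (smap E) ∧
        Relation.TransGen (stepc E) v w := by
  intro v hv
  refine hN.exists_chain_to_outvar (mem_range_smap_iff.2 ?_)
  rcases hv with hs | ht
  · exact mem_range_smap_iff.1 hs
  · exact hN.isGate_snd_of_not_isGate_fst v.edge_mem (mem_range_tmap_iff.not.1 ht)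
end
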